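/- Let M_1, ..., M_n be proper linear subspaces of ℝ^p, let A be a nonzero symmetric p×p real matrix, and let V = {y ∈ ℝ^p : yᵀAy = 0}. Then there exists a vector γ with non-negative integer coordinates such that γ ∉ M_1 ∪ ... ∪ M_n and γ ∉ V. -/

import Mathlib

/-!
Each proper subspace `Mᵢ` lies in a hyperplane `wᵢ ⬝ᵥ y = 0`, and by polarization the quadratic
form of a nonzero symmetric `A` is not identically zero. Hence the product of the linear forms
`wᵢ ⬝ᵥ y` and of `yᵀAy` is a nonzero polynomial, and a nonzero polynomial over an infinite
domain cannot vanish on the whole box `ℕ^p`.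
-/

open Matrix

theorem MvPolynomial.exists_natCast_eval_ne_zero {R σ : Type*} [CommRing R] [IsDomain R]
    [CharZero R] {F : MvPolynomial σ R} (hF : F ≠ 0) :
    ∃ γ : σ → ℕ, eval (fun j => (γ j : R)) F ≠ 0 := by
  by_contra! h
  refine hF (funext_set (fun _ => Set.range Nat.cast)
    (fun _ => Set.infinite_range_of_injective Nat.cast_injective) fun x hx => ?_)
  simp only [Set.mem_univ_pi, Set.mem_range] at hx
  choose γ hγ using hx
  simpa [← _root_.funext hγ] using h γ

theorem Submodule.exists_dotProduct_eq_zero_of_ne_top {K ι : Type*} [Field K] [Fintype ι]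
    [DecidableEq ι] {M : Submodule K (ι → K)} (hM : M ≠ ⊤) :
    ∃ w : ι → K, w ≠ 0 ∧ ∀ x ∈ M, w ⬝ᵥ x = 0 := by
  obtain ⟨f, hf0, hfM⟩ := exists_dual_map_eq_bot_of_lt_top hM.lt_top inferInstance
  obtain ⟨w, rfl⟩ := (dotProductEquiv K ι).surjective f
  refine ⟨w, by simpa using hf0, fun x hx => ?_⟩
  simpa [hfM] using mem_map_of_mem (f := dotProductEquiv K ι w) hx

theorem Matrix.IsSymm.exists_dotProduct_mulVec_self_ne_zero {R ι : Type*} [CommRing R]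
    [NoZeroDivisors R] [NeZero (2 : R)] [Fintype ι] [DecidableEq ι] {A : Matrix ι ι R}
    (hA : A.IsSymm) (hA0 : A ≠ 0) : ∃ x : ι → R, x ⬝ᵥ A *ᵥ x ≠ 0 := by
  by_contra! h
  refine hA0 (Matrix.ext fun i j => ?_)
  have hdiag (k : ι) : A k k = 0 := by simpa using h (Pi.single k 1)
  have hpolar : 2 * A i j = 0 := by
    have hsum := h (Pi.single i 1 + Pi.single j 1)
    simp only [mulVec_add, dotProduct_add, add_dotProduct, mulVec_single_one] at hsum
    simpa [hdiag, hA.apply i j, two_mul] using hsum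
  exact (mul_eq_zero.1 hpolar).resolve_left two_ne_zero

theorem Matrix.toMvPolynomial_ne_zero {R m n : Type*} [CommSemiring R] [Fintype n]
    [DecidableEq n] {W : Matrix m n R} {i : m} (hW : W i ≠ 0) : W.toMvPolynomial i ≠ 0 := by
  refine fun h => hW (funext fun j => ?_)
  simpa [h] using (W.toMvPolynomial_eval_eq_apply i (Pi.single j 1)).symm

noncomputable def Matrix.quadraticMvPolynomial {R n : Type*} [CommSemiring R] [Fintype n]
    (A : Matrix n n R) : MvPolynomial n R :=
  ∑ j, MvPolynomial.X j * A.toMvPolynomial j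

theorem Matrix.eval_quadraticMvPolynomial {R n : Type*} [CommSemiring R] [Fintype n]
    (A : Matrix n n R) (x : n → R) :
    MvPolynomial.eval x A.quadraticMvPolynomial = x ⬝ᵥ A *ᵥ x := by
  simp [quadraticMvPolynomial, toMvPolynomial_eval_eq_apply, dotProduct]

theorem stmt_2 (p n : ℕ)
    (M : Fin n → Submodule ℝ (Fin p → ℝ)) (hM : ∀ i, M i ≠ ⊤)
    (A : Matrix (Fin p) (Fin p) ℝ) (hA : A.IsSymm) (hA0 : A ≠ 0) :
    ∃ γ : Fin p → ℕ, (∀ i, (fun j => (γ j : ℝ)) ∉ M i) ∧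
      (fun j => (γ j : ℝ)) ⬝ᵥ A.mulVec (fun j => (γ j : ℝ)) ≠ 0 := by
  choose w hw0 hwM using fun i => Submodule.exists_dotProduct_eq_zero_of_ne_top (hM i)
  obtain ⟨x, hx⟩ := hA.exists_dotProduct_mulVec_self_ne_zero hA0
  have hQ : A.quadraticMvPolynomial ≠ 0 := fun h => hx (by
    rw [← eval_quadraticMvPolynomial, h, map_zero])
  have hL : ∏ i, (of w).toMvPolynomial i ≠ 0 :=
    Finset.prod_ne_zero_iff.2 fun i _ => toMvPolynomial_ne_zero (hw0 i)
  obtain ⟨γ, hγ⟩ := MvPolynomial.exists_natCast_eval_ne_zero (mul_ne_zero hL hQ)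
  rw [map_mul, map_prod, eval_quadraticMvPolynomial, mul_ne_zero_iff,
    Finset.prod_ne_zero_iff] at hγ
  refine ⟨γ, fun i hi => hγ.1 i (Finset.mem_univ i) ?_, hγ.2⟩
  rw [toMvPolynomial_eval_eq_apply]
  exact hwM i _ hi
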